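/- Let G be an endofunctor on the category of types (Set), M a lawful monad on types with unit η, and α : G ⟶ M a natural transformation. Let γ : X → G X and δ : Y → G Y be G-coalgebras with canonical cones γ_n : X → G^n 1 and δ_n : Y → G^n 1 into the final sequence (γ_0 = !, γ_{n+1} = G(γ_n) ∘ γ, and similarly for δ), and iterates γ^(n), δ^(n) defined by γ^(0) = η_X, γ^(n+1) = (α_X ∘ γ)* ∘ γ^(n) (Kleisli star of M). If states x ∈ X and y ∈ Y are finite-depth behaviourally equivalent, i.e. γ_n(x) = δ_n(y) for all n < ω, then they are α-trace equivalent, i.e. M(!_X)(γ^(n)(x)) = M(!_Y)(δ^(n)(y)) in M 1 for all n < ω. -/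
import Mathlib


universe u

/-- The `n`-fold iterate of a type constructor, `typePow G (n+1) X = G (typePow G n X)`. -/
def typePow (G : Type u → Type u) : ℕ → Type u → Type u
  | 0, X => X
  | n + 1, X => G (typePow G n X)

/-- Trace evaluation map `G^n 1 → M 1`. -/
def trT {G M : Type u → Type u} [Monad M]
    (α : ∀ {Z : Type u}, G Z → M Z) :
    ∀ n : ℕ, typePow G n PUnit.{u+1} → M PUnit.{u+1}
  | 0, _ => pure PUnit.unit
  | n + 1, t => α t >>= trT α n

/-- Reversed recurrence for the iterates. -/
theorem iter_swap {G M : Type u → Type u} [Monad M] [LawfulMonad M]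
    (α : ∀ {Z : Type u}, G Z → M Z)
    {X : Type u} (γ : X → G X) (iγ : ℕ → X → M X)
    (hiγ0 : ∀ x, iγ 0 x = pure x)
    (hiγs : ∀ n x, iγ (n + 1) x = iγ n x >>= fun z => α (γ z)) :
    ∀ n x, iγ (n + 1) x = α (γ x) >>= iγ n := by
  intro n
  induction n with
  | zero =>
    intro x
    rw [hiγs 0 x, hiγ0]
    rw [pure_bind]
    conv_rhs => rw [show iγ 0 = pure from funext hiγ0]
    rw [bind_pure]
  | succ n ih =>
    intro x
    rw [hiγs (n+1) x, ih x, bind_assoc]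
    exact bind_congr fun z => (hiγs n z).symm

/-- The key factorization: the depth-`n` trace factors through the cone map. -/
theorem trace_factor {G M : Type u → Type u} [Functor G] [LawfulFunctor G]
    [Monad M] [LawfulMonad M]
    (α : ∀ {Z : Type u}, G Z → M Z)
    (hnat : ∀ {Z W : Type u} (f : Z → W) (g : G Z), α (f <$> g) = f <$> α g) :
    ∀ n : ℕ, ∀ {X : Type u} (γ : X → G X)
    (cγ : ∀ n : ℕ, X → typePow G n PUnit.{u + 1})
    (_ : ∀ n x, cγ (n + 1) x = (cγ n) <$> (γ x))
    (iγ : ℕ → X → M X)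
    (_ : ∀ x, iγ 0 x = pure x)
    (_ : ∀ n x, iγ (n + 1) x = iγ n x >>= fun z => α (γ z))
    (x : X),
    (fun _ => PUnit.unit.{u + 1}) <$> iγ n x = trT α n (cγ n x) := by
  intro n
  induction n with
  | zero =>
    intro X γ cγ hcs iγ hi0 his x
    simp [trT, hi0]
  | succ n ih =>
    intro X γ cγ hcs iγ hi0 his x
    rw [@iter_swap G M _ _ @α X γ iγ hi0 his n x]
    rw [show trT (M := M) @α (n+1) (cγ (n+1) x)
          = α ((cγ n) <$> (γ x)) >>= trT (M := M) @α n from by rw [hcs n x]; rfl]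
    rw [hnat]
    rw [map_bind, bind_map_left]
    exact bind_congr fun z => ih γ cγ hcs iγ hi0 his z

theorem stmt2 {G M : Type u → Type u} [Functor G] [LawfulFunctor G]
    [Monad M] [LawfulMonad M]
    (α : ∀ {Z : Type u}, G Z → M Z)
    (hnat : ∀ {Z W : Type u} (f : Z → W) (g : G Z), α (f <$> g) = f <$> α g)
    {X Y : Type u} (γ : X → G X) (δ : Y → G Y)
    -- canonical cones into the final sequence (G^n 1)
    (cγ : ∀ n : ℕ, X → typePow G n PUnit.{u + 1})
    (cδ : ∀ n : ℕ, Y → typePow G n PUnit.{u + 1})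
    (hcγ0 : ∀ x, cγ 0 x = PUnit.unit)
    (hcγs : ∀ n x, cγ (n + 1) x = (cγ n) <$> (γ x))
    (hcδ0 : ∀ y, cδ 0 y = PUnit.unit)
    (hcδs : ∀ n y, cδ (n + 1) y = (cδ n) <$> (δ y))
    -- the iterates γ⁽ⁿ⁾ and δ⁽ⁿ⁾
    (iγ : ℕ → X → M X) (iδ : ℕ → Y → M Y)
    (hiγ0 : ∀ x, iγ 0 x = pure x)
    (hiγs : ∀ n x, iγ (n + 1) x = iγ n x >>= fun z => α (γ z))
    (hiδ0 : ∀ y, iδ 0 y = pure y)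
    (hiδs : ∀ n y, iδ (n + 1) y = iδ n y >>= fun z => α (δ z))
    (x : X) (y : Y)
    -- finite-depth behavioural equivalence
    (hbeh : ∀ n, cγ n x = cδ n y) :
    -- α-trace equivalence
    ∀ n, (fun _ => PUnit.unit.{u + 1}) <$> iγ n x
       = (fun _ => PUnit.unit.{u + 1}) <$> iδ n y := by
  intro n
  rw [@trace_factor G M _ _ _ _ @α @hnat n X γ cγ hcγs iγ hiγ0 hiγs x,
      @trace_factor G M _ _ _ _ @α @hnat n Y δ cδ hcδs iδ hiδ0 hiδs y,
      hbeh n]
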